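/- Let Q be positive definite n×n, A an n×n matrix, and let Π and P be positive definite n×n matrices with Π ⪯ P. Then Q⁻¹ − Q⁻¹ A (Π + Aᵀ Q⁻¹ A)⁻¹ Aᵀ Q⁻¹ ⪯ Q⁻¹ − Q⁻¹ A (P + Aᵀ Q⁻¹ A)⁻¹ Aᵀ Q⁻¹. -/

import Mathlib

/-! With `M = Aᵀ Q⁻¹ A ⪰ 0`, the map is `P ↦ Q⁻¹ - (Q⁻¹A) (P + M)⁻¹ (Q⁻¹A)ᵀ`: adding `M` is
monotone, inversion is antitone on positive definite matrices, and a congruence preserves the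
Loewner order. Antitonicity of inversion comes from writing `C⁻¹ - B⁻¹` as
`D C D + B⁻¹ (B - C) B⁻¹` with `D = C⁻¹ - B⁻¹`, a sum of congruences of positive semidefinite
matrices. -/

open Matrix

open scoped MatrixOrder ComplexOrder

namespace Matrix

variable {𝕜 : Type*} [RCLike 𝕜] {n : Type*} [Fintype n] [DecidableEq n]

theorem inv_sub_inv_eq_mul_mul_add_mul_mul {B C : Matrix n n 𝕜} (hB : IsUnit B)
    (hC : IsUnit C) :
    C⁻¹ - B⁻¹ = (C⁻¹ - B⁻¹) * C * (C⁻¹ - B⁻¹) + B⁻¹ * (B - C) * B⁻¹ := by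
  rw [isUnit_iff_isUnit_det] at hB hC
  simp only [Matrix.sub_mul, Matrix.mul_sub, nonsing_inv_mul _ hC, mul_nonsing_inv _ hC,
    nonsing_inv_mul _ hB, Matrix.mul_assoc, Matrix.one_mul, Matrix.mul_one]
  abel

theorem PosDef.inv_anti {B C : Matrix n n 𝕜} (hC : C.PosDef) (hCB : C ≤ B) : B⁻¹ ≤ C⁻¹ := by
  have hB : B.PosDef := by simpa using hC.add_posSemidef (le_iff.mp hCB)
  rw [le_iff, inv_sub_inv_eq_mul_mul_add_mul_mul hB.isUnit hC.isUnit]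
  have hD : (C⁻¹ - B⁻¹)ᴴ = C⁻¹ - B⁻¹ := (hC.inv.isHermitian.sub hB.inv.isHermitian).eq
  have hBinv : B⁻¹ᴴ = B⁻¹ := hB.inv.isHermitian.eq
  simpa only [hD, hBinv] using (hC.posSemidef.mul_mul_conjTranspose_same (C⁻¹ - B⁻¹)).add
    ((le_iff.mp hCB).mul_mul_conjTranspose_same B⁻¹)

end Matrix

section Riccati

variable {𝕜 : Type*} [RCLike 𝕜] {m n : Type*} [Fintype m] [Fintype n] [DecidableEq n]

noncomputable def riccatiMap (W : Matrix m m 𝕜) (X : Matrix m n 𝕜) (P : Matrix n n 𝕜) :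
    Matrix m m 𝕜 :=
  W - W * X * (P + Xᴴ * W * X)⁻¹ * Xᴴ * W

theorem riccatiMap_mono {W : Matrix m m 𝕜} (hW : W.PosSemidef) (X : Matrix m n 𝕜)
    {Pi P : Matrix n n 𝕜} (hPi : Pi.PosDef) (hle : Pi ≤ P) :
    riccatiMap W X Pi ≤ riccatiMap W X P := by
  have hinv : (P + Xᴴ * W * X)⁻¹ ≤ (Pi + Xᴴ * W * X)⁻¹ :=
    (hPi.add_posSemidef (hW.conjTranspose_mul_mul_same X)).inv_anti (add_le_add_left hle _)
  have hdiff : riccatiMap W X P - riccatiMap W X Pi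
      = (W * X) * ((Pi + Xᴴ * W * X)⁻¹ - (P + Xᴴ * W * X)⁻¹) * (W * X)ᴴ := by
    rw [conjTranspose_mul, hW.isHermitian.eq, riccatiMap, riccatiMap]
    simp only [Matrix.mul_sub, Matrix.sub_mul, Matrix.mul_assoc]
    abel
  rw [le_iff, hdiff]
  exact (le_iff.mp hinv).mul_mul_conjTranspose_same (W * X)

end Riccati

theorem riccati_map_monotone_general {n : Type*} [Fintype n] [DecidableEq n]
    (Q A Pi P : Matrix n n ℝ) (hQ : Q.PosDef) (hPi : Pi.PosDef)
    (hle : (P - Pi).PosSemidef) :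
    ((Q⁻¹ - Q⁻¹ * A * (P + Aᵀ * Q⁻¹ * A)⁻¹ * Aᵀ * Q⁻¹) -
      (Q⁻¹ - Q⁻¹ * A * (Pi + Aᵀ * Q⁻¹ * A)⁻¹ * Aᵀ * Q⁻¹)).PosSemidef := by
  have hAT : Aᴴ = Aᵀ := conjTranspose_eq_transpose_of_trivial A
  simpa only [riccatiMap, hAT] using
    le_iff.mp (riccatiMap_mono hQ.inv.posSemidef A hPi (le_iff.mpr hle))

theorem riccati_map_monotone {n : Type*} [Fintype n] [DecidableEq n]
    (Q A Pi P : Matrix n n ℝ) (hQ : Q.PosDef) (hPi : Pi.PosDef) (hP : P.PosDef)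
    (hle : (P - Pi).PosSemidef) :
    ((Q⁻¹ - Q⁻¹ * A * (P + Aᵀ * Q⁻¹ * A)⁻¹ * Aᵀ * Q⁻¹) -
      (Q⁻¹ - Q⁻¹ * A * (Pi + Aᵀ * Q⁻¹ * A)⁻¹ * Aᵀ * Q⁻¹)).PosSemidef :=
  riccati_map_monotone_general Q A Pi P hQ hPi hle
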